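/- arXiv:2504.11511 — 3 statements merged into one kernel-verified Lean document; each statement's English description precedes it below -/
import Mathlib

section
/- Combining the performance-difference consequence with the Rényi-to-TV bound: in a finite MDP with rewards in [0,1] and discount γ, any mechanism satisfying (α, β)-behavioral privacy (for α > 1) with β ≤ 2 guarantees the expected utility loss satisfies E[V^{π*}(s₀) − V^{π_priv}(s₀)] ≤ sqrt(β/2)/(1−γ), provided π* is the policy the mechanism would output on the adjacent dataset achieving optimal value. -/
open scoped BigOperators

/-- `p` is a probability mass function on the finite type `α`. -/
def IsPMF {α : Type*} [Fintype α] (p : α → ℝ) : Prop :=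
  (∀ x, 0 ≤ p x) ∧ ∑ x, p x = 1

/-- Rényi divergence of order `a` between finite distributions. -/
noncomputable def renyiDiv {α : Type*} [Fintype α] (a : ℝ) (p q : α → ℝ) : ℝ :=
  (a - 1)⁻¹ * Real.log (∑ x, if q x = 0 then 0 else p x ^ a * q x ^ (1 - a))

open Real in

/-- `(x+1) log x - 2(x-1)` is monotone on `(0,∞)`. -/
lemma psi_mono : MonotoneOn (fun x : ℝ => (x+1) * Real.log x - 2*(x-1)) (Set.Ioi 0) := by
  have hder : ∀ x : ℝ, 0 < x → HasDerivAt (fun x : ℝ => (x+1) * Real.log x - 2*(x-1))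
      (Real.log x + (x+1) * x⁻¹ - 2) x := by
    intro x hx0
    have := ((hasDerivAt_id x).add_const 1).mul (Real.hasDerivAt_log hx0.ne')
    exact (this.sub (((hasDerivAt_id x).sub_const 1).const_mul 2)).congr_deriv (by simp only [id]; ring)
  apply monotoneOn_of_deriv_nonneg (convex_Ioi 0)
  · apply ContinuousOn.sub
    · exact (continuousOn_id.add continuousOn_const).mul
        (Real.continuousOn_log.mono (by intro x hx; exact ne_of_gt hx))
    · exact (continuousOn_const.mul (continuousOn_id.sub continuousOn_const))
  · intro x hx
    rw [interior_Ioi] at hx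
    exact ((hder x hx).differentiableAt).differentiableWithinAt
  · intro x hx
    rw [interior_Ioi] at hx
    have hx0 : (0:ℝ) < x := hx
    have hxne : x ≠ 0 := ne_of_gt hx0
    rw [(hder x hx).deriv]
    have h1 : 1 - x⁻¹ ≤ Real.log x := Real.one_sub_inv_le_log_of_pos hx0
    have h2 : (x+1) * x⁻¹ = 1 + x⁻¹ := by field_simp
    nlinarith [h1]

/-- key inequality: `3(t-1)^2 ≤ (2t+4)(t log t - t + 1)` for `t ≥ 0`. -/
lemma key_ineq {t : ℝ} (ht : 0 ≤ t) :
    3*(t-1)^2 ≤ (2*t+4)*(t*Real.log t - t + 1) := by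
  rcases eq_or_lt_of_le ht with h0 | h0
  · rw [← h0]; norm_num
  -- define g
  set g : ℝ → ℝ := fun x => (2*x+4)*(x*Real.log x - x + 1) - 3*(x-1)^2 with hg
  have hder : ∀ x : ℝ, 0 < x → HasDerivAt g
      (2*(x*Real.log x - x + 1) + (2*x+4)*(Real.log x + x * x⁻¹ - 1) - 3*(2*(x-1))) x := by
    intro x hx0
    have hlog : HasDerivAt (fun x : ℝ => x * Real.log x) (Real.log x + x * x⁻¹) x := by
      exact ((hasDerivAt_id x).mul (Real.hasDerivAt_log hx0.ne')).congr_deriv (by simp only [one_mul, id])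
    have h1 : HasDerivAt (fun x : ℝ => x*Real.log x - x + 1)
        (Real.log x + x * x⁻¹ - 1) x := (hlog.sub (hasDerivAt_id x)).add_const 1
    have h2 : HasDerivAt (fun x : ℝ => 2*x+4) 2 x := by
      simpa using ((hasDerivAt_id x).const_mul 2).add_const 4
    have h3 : HasDerivAt (fun x : ℝ => 3*(x-1)^2) (3*(2*(x-1))) x := by
      have := (((hasDerivAt_id x).sub_const 1).pow 2).const_mul 3
      simpa [mul_comm] using this
    exact (h2.mul h1).sub h3
  -- simplify derivative: = 4 * psi x
  have hderiv_eq : ∀ x : ℝ, 0 < x →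
      deriv g x = 4*((x+1) * Real.log x - 2*(x-1)) := by
    intro x hx0
    rw [(hder x hx0).deriv]
    have : x * x⁻¹ = 1 := mul_inv_cancel₀ hx0.ne'
    rw [this]; ring
  have hpsi1 : ((1:ℝ)+1) * Real.log 1 - 2*(1-1) = 0 := by simp
  have hg1 : g 1 = 0 := by simp [hg]
  -- monotone on [1,∞)
  have hmono : MonotoneOn g (Set.Ici 1) := by
    apply monotoneOn_of_deriv_nonneg (convex_Ici 1)
    · apply ContinuousOn.sub
      · apply ContinuousOn.mul
        · fun_prop
        · apply ContinuousOn.add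
          · apply ContinuousOn.sub
            · exact continuousOn_id.mul (Real.continuousOn_log.mono
                (by intro x hx; simp at hx ⊢; linarith))
            · exact continuousOn_id
          · exact continuousOn_const
      · fun_prop
    · intro x hx
      rw [interior_Ici] at hx
      exact ((hder x (by linarith [hx.out])).differentiableAt).differentiableWithinAt
    · intro x hx
      rw [interior_Ici] at hx
      have hx1 : (1:ℝ) < x := hx
      rw [hderiv_eq x (by linarith)]
      have := psi_mono (Set.mem_Ioi.2 one_pos) (Set.mem_Ioi.2 (by linarith : (0:ℝ) < x)) hx1.le
      simp only [hpsi1] at this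
      linarith [this]
  -- antitone on (0,1]
  have hanti : AntitoneOn g (Set.Ioc 0 1) := by
    apply antitoneOn_of_deriv_nonpos (convex_Ioc 0 1)
    · apply ContinuousOn.sub
      · apply ContinuousOn.mul
        · fun_prop
        · apply ContinuousOn.add
          · apply ContinuousOn.sub
            · exact continuousOn_id.mul (Real.continuousOn_log.mono
                (by intro x hx; exact ne_of_gt hx.1))
            · exact continuousOn_id
          · exact continuousOn_const
      · fun_prop
    · intro x hx
      rw [interior_Ioc] at hx
      exact ((hder x hx.1).differentiableAt).differentiableWithinAt
    · intro x hx
      rw [interior_Ioc] at hx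
      rw [hderiv_eq x hx.1]
      have := psi_mono (Set.mem_Ioi.2 hx.1) (Set.mem_Ioi.2 one_pos) hx.2.le
      simp only [hpsi1] at this
      linarith [this]
  have : 0 ≤ g t := by
    rcases le_or_gt 1 t with h | h
    · have := hmono (Set.mem_Ici.2 le_rfl) (Set.mem_Ici.2 h) h
      rwa [hg1] at this
    · have := hanti (Set.mem_Ioc.2 ⟨h0, h.le⟩) (Set.mem_Ioc.2 ⟨one_pos, le_rfl⟩) h.le
      rwa [hg1] at this
  simp only [hg] at this
  linarith

lemma pointwise_pinsker {p q : ℝ} (hp : 0 ≤ p) (hq : 0 ≤ q) (hac : q = 0 → p = 0) :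
    3*(p-q)^2 ≤ (2*p+4*q)*(p*Real.log (p/q) - p + q) := by
  rcases eq_or_lt_of_le hq with h0 | h0
  · have hp0 : p = 0 := hac h0.symm
    simp [hp0, ← h0]
  · have hqne : q ≠ 0 := ne_of_gt h0
    have e1 : 3*(p-q)^2 = q^2 * (3*(p/q-1)^2) := by field_simp
    have e2 : (2*p+4*q)*(p*Real.log (p/q) - p + q)
        = q^2 * ((2*(p/q)+4)*((p/q)*Real.log (p/q) - (p/q) + 1)) := by field_simp
    rw [e1, e2]
    exact mul_le_mul_of_nonneg_left (key_ineq (div_nonneg hp h0.le)) (sq_nonneg q)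

lemma phi_nonneg {p q : ℝ} (hp : 0 ≤ p) (hq : 0 ≤ q) (hac : q = 0 → p = 0) :
    0 ≤ p*Real.log (p/q) - p + q := by
  have h := pointwise_pinsker hp hq hac
  rcases eq_or_lt_of_le (by linarith : (0:ℝ) ≤ 2*p+4*q) with h0 | h0
  · have hp0 : p = 0 := by linarith
    have hq0 : q = 0 := by linarith
    simp [hp0, hq0]
  · nlinarith [sq_nonneg (p-q)]


/-- Combining the performance-difference consequence with the Rényi-to-TV bound:
in a finite MDP with rewards in `[0,1]` and discount `γ`, the discounted return `G`
of any trajectory lies in `[0, 1/(1−γ)]`. If a mechanism satisfies `(a, β)`-behavioral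
privacy (`a > 1`) with `β ≤ 2`, i.e. the trajectory distributions `pStar` (of the
optimal policy `π*` output on the adjacent dataset) and `pPriv` (of `π_priv`) satisfy
`D_a(pStar ‖ pPriv) ≤ β`, then the expected utility loss satisfies
`E[V^{π*}(s₀) − V^{π_priv}(s₀)] ≤ sqrt(β/2)/(1−γ)`. -/
theorem behavioral_privacy_utility_bound {T : Type*} [Fintype T]
    (γ : ℝ) (hγ : 0 ≤ γ) (hγ1 : γ < 1)
    (a β : ℝ) (ha : 1 < a) (hβ : β ≤ 2)
    (pStar pPriv : T → ℝ) (hpStar : IsPMF pStar) (hpPriv : IsPMF pPriv)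
    (hac : ∀ τ, pPriv τ = 0 → pStar τ = 0)
    (G : T → ℝ) (hG : ∀ τ, G τ ∈ Set.Icc (0 : ℝ) ((1 - γ)⁻¹))
    (hpriv : renyiDiv a pStar pPriv ≤ β) :
    (∑ τ, pStar τ * G τ) - (∑ τ, pPriv τ * G τ) ≤ Real.sqrt (β / 2) / (1 - γ) := by
  obtain ⟨hp0, hp1⟩ := hpStar
  obtain ⟨hq0, hq1⟩ := hpPriv
  have hγ0 : (0:ℝ) < 1 - γ := by linarith
  have ha1 : (0:ℝ) < a - 1 := by linarith
  set KL := ∑ τ, pStar τ * Real.log (pStar τ / pPriv τ) with hKL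
  -- Step B : KL ≤ β  (Rényi monotonicity via Jensen)
  have hKLβ : KL ≤ β := by
    set s := Finset.univ.filter (fun τ => pStar τ ≠ 0) with hs
    have hmem : ∀ τ, τ ∈ s ↔ pStar τ ≠ 0 := by
      intro τ; simp [hs]
    have hposp : ∀ τ ∈ s, 0 < pStar τ := fun τ hτ =>
      lt_of_le_of_ne (hp0 τ) (Ne.symm ((hmem τ).1 hτ))
    have hposq : ∀ τ ∈ s, 0 < pPriv τ := by
      intro τ hτ
      rcases eq_or_lt_of_le (hq0 τ) with h | h
      · exact absurd (hac τ h.symm) ((hmem τ).1 hτ)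
      · exact h
    have hws : ∑ τ ∈ s, pStar τ = 1 := by
      rw [← hp1]
      apply Finset.sum_subset (Finset.subset_univ s)
      intro τ _ hτ
      have := (hmem τ).not.1 hτ
      simpa using this
    have hsum_ext : ∑ τ ∈ s, pStar τ * Real.log (pStar τ / pPriv τ) = KL := by
      rw [hKL]
      apply Finset.sum_subset (Finset.subset_univ s)
      intro τ _ hτ
      have h0 : pStar τ = 0 := by
        have := (hmem τ).not.1 hτ; simpa using this
      simp [h0]
    have hjen := convexOn_exp.map_sum_le (t := s) (w := fun τ => pStar τ)
        (p := fun τ => (a-1) * Real.log (pStar τ / pPriv τ))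
        (fun τ _ => hp0 τ) hws (fun τ _ => Set.mem_univ _)
    have hL : ∑ τ ∈ s, pStar τ • ((a-1) * Real.log (pStar τ / pPriv τ)) = (a-1) * KL := by
      simp only [smul_eq_mul]
      rw [← hsum_ext, Finset.mul_sum]
      exact Finset.sum_congr rfl (fun τ _ => by ring)
    have hR : ∑ τ ∈ s, pStar τ • Real.exp ((a-1) * Real.log (pStar τ / pPriv τ))
        = ∑ τ ∈ s, pStar τ * (pStar τ / pPriv τ) ^ (a-1) := by
      apply Finset.sum_congr rfl
      intro τ hτ
      have hr : 0 < pStar τ / pPriv τ := div_pos (hposp τ hτ) (hposq τ hτ)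
      rw [smul_eq_mul, Real.rpow_def_of_pos hr, mul_comm (Real.log _)]
    have h0off : ∀ τ ∈ Finset.univ, τ ∉ s →
        (if pPriv τ = 0 then (0:ℝ) else pStar τ ^ a * pPriv τ ^ (1-a)) = 0 := by
      intro τ _ hτ
      have h0 : pStar τ = 0 := by
        have := (hmem τ).not.1 hτ; simpa using this
      by_cases hq : pPriv τ = 0
      · simp [hq]
      · simp [hq, h0, Real.zero_rpow (by linarith : a ≠ 0)]
    have hS : (∑ τ, if pPriv τ = 0 then (0:ℝ) else pStar τ ^ a * pPriv τ ^ (1-a))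
        = ∑ τ ∈ s, pStar τ * (pStar τ / pPriv τ) ^ (a-1) := by
      rw [← Finset.sum_subset (Finset.subset_univ s) h0off]
      apply Finset.sum_congr rfl
      intro τ hτ
      have hpτ := hposp τ hτ
      have hqτ := hposq τ hτ
      rw [if_neg hqτ.ne']
      have e1 : pStar τ ^ a = pStar τ * pStar τ ^ (a-1) := by
        have h := Real.rpow_add hpτ 1 (a-1)
        rw [show (1:ℝ)+(a-1) = a by ring] at h
        simpa using h
      have e2 : pPriv τ ^ (1-a) = (pPriv τ ^ (a-1))⁻¹ := by
        rw [show (1:ℝ)-a = -(a-1) by ring, Real.rpow_neg (hq0 τ)]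
      rw [e1, e2, Real.div_rpow (hp0 τ) (hq0 τ)]
      ring
    have hchain : Real.exp ((a-1)*KL)
        ≤ ∑ τ, if pPriv τ = 0 then (0:ℝ) else pStar τ ^ a * pPriv τ ^ (1-a) := by
      rw [hS, ← hR, ← hL]
      exact hjen
    set S := ∑ τ, if pPriv τ = 0 then (0:ℝ) else pStar τ ^ a * pPriv τ ^ (1-a) with hSdef
    have hSpos : 0 < S := lt_of_lt_of_le (Real.exp_pos _) hchain
    have hlog : (a-1)*KL ≤ Real.log S := (Real.le_log_iff_exp_le hSpos).2 hchain
    have hren : renyiDiv a pStar pPriv = (a-1)⁻¹ * Real.log S := rfl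
    have hKLeq : KL = (a-1)⁻¹ * ((a-1)*KL) := by field_simp
    rw [hKLeq]
    calc (a-1)⁻¹ * ((a-1)*KL) ≤ (a-1)⁻¹ * Real.log S :=
        mul_le_mul_of_nonneg_left hlog (by positivity)
      _ ≤ β := by rw [← hren]; exact hpriv
  -- Step C : Pinsker  D² ≤ 2 KL
  set D := ∑ τ, |pStar τ - pPriv τ| with hD
  have hphi : ∀ τ, 0 ≤ pStar τ * Real.log (pStar τ / pPriv τ) - pStar τ + pPriv τ :=
    fun τ => phi_nonneg (hp0 τ) (hq0 τ) (hac τ)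
  set A : T → ℝ := fun τ => Real.sqrt ((2*pStar τ + 4*pPriv τ)/3) with hA
  set B : T → ℝ := fun τ => Real.sqrt (pStar τ * Real.log (pStar τ / pPriv τ) - pStar τ + pPriv τ)
    with hB
  have hAB : ∀ τ, |pStar τ - pPriv τ| ≤ A τ * B τ := by
    intro τ
    rw [hA, hB, ← Real.sqrt_mul (by have := hp0 τ; have := hq0 τ; positivity)]
    rw [← Real.sqrt_sq_eq_abs]
    apply Real.sqrt_le_sqrt
    nlinarith [pointwise_pinsker (hp0 τ) (hq0 τ) (hac τ)]
  have hA2 : ∑ τ, A τ ^ 2 = 2 := by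
    have h : ∀ τ : T, A τ ^ 2 = (2*pStar τ + 4*pPriv τ)/3 := by
      intro τ
      rw [hA]
      exact Real.sq_sqrt (by have := hp0 τ; have := hq0 τ; positivity)
    calc ∑ τ, A τ ^ 2 = ∑ τ, (2*pStar τ + 4*pPriv τ)/3 :=
        Finset.sum_congr rfl (fun τ _ => h τ)
      _ = (2*(∑ τ, pStar τ) + 4*(∑ τ, pPriv τ))/3 := by
          rw [← Finset.sum_div, Finset.sum_add_distrib, ← Finset.mul_sum, ← Finset.mul_sum]
      _ = 2 := by rw [hp1, hq1]; norm_num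
  have hB2 : ∑ τ, B τ ^ 2 = KL := by
    have h : ∀ τ : T, B τ ^ 2 = pStar τ * Real.log (pStar τ / pPriv τ) - pStar τ + pPriv τ := by
      intro τ; rw [hB]; exact Real.sq_sqrt (hphi τ)
    calc ∑ τ, B τ ^ 2
        = ∑ τ, (pStar τ * Real.log (pStar τ / pPriv τ) - pStar τ + pPriv τ) :=
        Finset.sum_congr rfl (fun τ _ => h τ)
      _ = KL := by
          rw [Finset.sum_add_distrib, Finset.sum_sub_distrib, hp1, hq1, hKL]; ring
  have hcs := Finset.sum_mul_sq_le_sq_mul_sq Finset.univ A B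
  have hDnn : 0 ≤ D := Finset.sum_nonneg (fun τ _ => abs_nonneg _)
  have hD2 : D^2 ≤ 2*KL := by
    have h1 : D ≤ ∑ τ, A τ * B τ := Finset.sum_le_sum (fun τ _ => hAB τ)
    calc D^2 ≤ (∑ τ, A τ * B τ)^2 := by
          apply pow_le_pow_left₀ hDnn h1
      _ ≤ (∑ τ, A τ ^ 2) * ∑ τ, B τ ^ 2 := hcs
      _ = 2*KL := by rw [hA2, hB2]
  -- Step A : utility gap ≤ (1-γ)⁻¹ * D/2
  have hsum0 : ∑ τ, (pStar τ - pPriv τ) = 0 := by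
    rw [Finset.sum_sub_distrib, hp1, hq1]; ring
  have hstep : (∑ τ, pStar τ * G τ) - (∑ τ, pPriv τ * G τ) ≤ (1-γ)⁻¹ * (D/2) := by
    rw [← Finset.sum_sub_distrib]
    have hterm : ∀ τ, pStar τ * G τ - pPriv τ * G τ
        ≤ (1-γ)⁻¹ * ((|pStar τ - pPriv τ| + (pStar τ - pPriv τ))/2) := by
      intro τ
      obtain ⟨hG0, hG1⟩ := hG τ
      rcases le_or_gt (pStar τ) (pPriv τ) with h | h
      · have habs : |pStar τ - pPriv τ| = -(pStar τ - pPriv τ) := abs_of_nonpos (by linarith)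
        rw [habs]
        have hle : (pStar τ - pPriv τ) * G τ ≤ 0 :=
          mul_nonpos_of_nonpos_of_nonneg (by linarith) hG0
        nlinarith
      · have habs : |pStar τ - pPriv τ| = pStar τ - pPriv τ := abs_of_pos (by linarith)
        rw [habs]
        have hle : (pStar τ - pPriv τ) * G τ ≤ (pStar τ - pPriv τ) * (1-γ)⁻¹ :=
          mul_le_mul_of_nonneg_left hG1 (by linarith)
        nlinarith
    calc ∑ τ, (pStar τ * G τ - pPriv τ * G τ)
        ≤ ∑ τ, (1-γ)⁻¹ * ((|pStar τ - pPriv τ| + (pStar τ - pPriv τ))/2) :=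
        Finset.sum_le_sum (fun τ _ => hterm τ)
      _ = (1-γ)⁻¹ * ((∑ τ, (|pStar τ - pPriv τ| + (pStar τ - pPriv τ)))/2) := by
          rw [← Finset.mul_sum, ← Finset.sum_div]
      _ = (1-γ)⁻¹ * ((D + 0)/2) := by
          rw [Finset.sum_add_distrib, hsum0, ← hD]
      _ = (1-γ)⁻¹ * (D/2) := by ring
  -- combine
  have hKL0 : 0 ≤ KL := by nlinarith [sq_nonneg D]
  have hβ0 : 0 ≤ β := le_trans hKL0 hKLβ
  have hhalf : D/2 ≤ Real.sqrt (β/2) := by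
    have h2 : (D/2)^2 ≤ β/2 := by nlinarith
    calc D/2 = Real.sqrt ((D/2)^2) := (Real.sqrt_sq (by positivity)).symm
      _ ≤ Real.sqrt (β/2) := Real.sqrt_le_sqrt h2
  calc (∑ τ, pStar τ * G τ) - (∑ τ, pPriv τ * G τ) ≤ (1-γ)⁻¹ * (D/2) := hstep
    _ ≤ (1-γ)⁻¹ * Real.sqrt (β/2) := mul_le_mul_of_nonneg_left hhalf (by positivity)
    _ = Real.sqrt (β/2) / (1-γ) := (div_eq_inv_mul _ _).symm
end

section
/- Shannon entropy of the Boltzmann policy is nondecreasing in temperature: for a fixed finite vector of Q-values, the entropy H(π_τ) of the softmax distribution π_τ(a) ∝ exp(Q(a)/τ) is a nondecreasing function of τ > 0. -/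
open scoped BigOperators

/-- The Boltzmann (softmax) policy at temperature `τ`:
`π_τ(a) = exp(Q(a)/τ) / Σ_{a'} exp(Q(a')/τ)`. -/
noncomputable def boltzmann {A : Type*} [Fintype A] (Q : A → ℝ) (τ : ℝ) (a : A) : ℝ :=
  Real.exp (Q a / τ) / ∑ a', Real.exp (Q a' / τ)

/-- Shannon entropy `H(π) = −Σ_a π(a) log π(a)` of a finite distribution. -/
noncomputable def shannonEntropy {A : Type*} [Fintype A] (π : A → ℝ) : ℝ :=
  -∑ a, π a * Real.log (π a)

section Aux

variable {A : Type*} [Fintype A] [Nonempty A]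

lemma Zpos (Q : A → ℝ) (τ : ℝ) : 0 < ∑ a, Real.exp (Q a / τ) :=
  Finset.sum_pos (fun a _ => Real.exp_pos _) Finset.univ_nonempty

lemma bpos (Q : A → ℝ) (τ : ℝ) (a : A) : 0 < boltzmann Q τ a :=
  div_pos (Real.exp_pos _) (Zpos Q τ)

lemma bsum (Q : A → ℝ) (τ : ℝ) : ∑ a, boltzmann Q τ a = 1 := by
  unfold boltzmann
  rw [← Finset.sum_div]
  exact div_self (ne_of_gt (Zpos Q τ))

lemma blog (Q : A → ℝ) (τ : ℝ) (a : A) :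
    Real.log (boltzmann Q τ a)
      = Q a / τ - Real.log (∑ a', Real.exp (Q a' / τ)) := by
  unfold boltzmann
  rw [Real.log_div (Real.exp_pos _).ne' (Zpos Q τ).ne', Real.log_exp]

lemma gibbs_le (Q : A → ℝ) (τ : ℝ) (p : A → ℝ)
    (hp : ∀ a, 0 < p a) (hsum : ∑ a, p a = 1) :
    (-∑ a, p a * Real.log (p a)) + (1/τ) * ∑ a, p a * Q a
      ≤ Real.log (∑ a, Real.exp (Q a / τ)) := by
  set Z := ∑ a, Real.exp (Q a / τ) with hZ
  have hZpos : 0 < Z := Zpos Q τ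
  have key : ∀ a ∈ Finset.univ (α := A),
      p a * Real.log (boltzmann Q τ a / p a) ≤ boltzmann Q τ a - p a := by
    intro a _
    have h1 : Real.log (boltzmann Q τ a / p a) ≤ boltzmann Q τ a / p a - 1 :=
      Real.log_le_sub_one_of_pos (div_pos (bpos Q τ a) (hp a))
    calc p a * Real.log (boltzmann Q τ a / p a)
        ≤ p a * (boltzmann Q τ a / p a - 1) :=
          mul_le_mul_of_nonneg_left h1 (hp a).le
      _ = boltzmann Q τ a - p a := by
          field_simp [(hp a).ne']
  have hsumle : ∑ a, p a * Real.log (boltzmann Q τ a / p a) ≤ 0 := by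
    calc ∑ a, p a * Real.log (boltzmann Q τ a / p a)
        ≤ ∑ a, (boltzmann Q τ a - p a) := Finset.sum_le_sum key
      _ = 0 := by rw [Finset.sum_sub_distrib, bsum, hsum]; ring
  have term : ∀ a, p a * Real.log (boltzmann Q τ a / p a)
      = p a * (Q a / τ) - p a * Real.log Z - p a * Real.log (p a) := by
    intro a
    rw [Real.log_div (bpos Q τ a).ne' (hp a).ne', blog]
    ring
  have expand : ∑ a, p a * Real.log (boltzmann Q τ a / p a)
      = (1/τ) * (∑ a, p a * Q a) - Real.log Z + (-∑ a, p a * Real.log (p a)) := by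
    calc ∑ a, p a * Real.log (boltzmann Q τ a / p a)
        = ∑ a, (p a * (Q a / τ) - p a * Real.log Z - p a * Real.log (p a)) := by
          exact Finset.sum_congr rfl (fun a _ => term a)
      _ = (∑ a, p a * (Q a / τ)) - (∑ a, p a) * Real.log Z
            - ∑ a, p a * Real.log (p a) := by
          rw [Finset.sum_sub_distrib, Finset.sum_sub_distrib, Finset.sum_mul]
      _ = (1/τ) * (∑ a, p a * Q a) - Real.log Z + (-∑ a, p a * Real.log (p a)) := by
          rw [hsum, Finset.mul_sum]
          congr 1
          · congr 1
            · exact Finset.sum_congr rfl (fun a _ => by ring)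
            · ring
  linarith [expand ▸ hsumle]

lemma gibbs_eq (Q : A → ℝ) (τ : ℝ) :
    (-∑ a, boltzmann Q τ a * Real.log (boltzmann Q τ a))
      + (1/τ) * ∑ a, boltzmann Q τ a * Q a
      = Real.log (∑ a, Real.exp (Q a / τ)) := by
  set Z := ∑ a, Real.exp (Q a / τ) with hZ
  have term : ∀ a, boltzmann Q τ a * Real.log (boltzmann Q τ a)
      = boltzmann Q τ a * (Q a / τ) - boltzmann Q τ a * Real.log Z := by
    intro a; rw [blog]; ring
  have : ∑ a, boltzmann Q τ a * Real.log (boltzmann Q τ a)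
      = (1/τ) * (∑ a, boltzmann Q τ a * Q a) - Real.log Z := by
    calc ∑ a, boltzmann Q τ a * Real.log (boltzmann Q τ a)
        = ∑ a, (boltzmann Q τ a * (Q a / τ) - boltzmann Q τ a * Real.log Z) :=
          Finset.sum_congr rfl (fun a _ => term a)
      _ = (∑ a, boltzmann Q τ a * (Q a / τ)) - (∑ a, boltzmann Q τ a) * Real.log Z := by
          rw [Finset.sum_sub_distrib, Finset.sum_mul]
      _ = (1/τ) * (∑ a, boltzmann Q τ a * Q a) - Real.log Z := by
          rw [bsum, Finset.mul_sum]
          congr 1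
          · exact Finset.sum_congr rfl (fun a _ => by ring)
          · ring
  linarith [this]

end Aux

/-- Shannon entropy of the Boltzmann policy is nondecreasing in the temperature:
for fixed finite Q-values, `τ ↦ H(π_τ)` is monotone nondecreasing on `τ > 0`. -/
theorem boltzmann_entropy_monotone {A : Type*} [Fintype A] [Nonempty A] (Q : A → ℝ) :
    MonotoneOn (fun τ : ℝ => shannonEntropy (boltzmann Q τ)) (Set.Ioi 0) := by
  intro τ1 h1 τ2 h2 h12
  simp only [Set.mem_Ioi] at h1 h2
  rcases eq_or_lt_of_le h12 with rfl | hlt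
  · exact le_refl _
  have A := gibbs_le Q τ1 (boltzmann Q τ2) (bpos Q τ2) (bsum Q τ2)
  have Aeq := gibbs_eq Q τ1
  have B := gibbs_le Q τ2 (boltzmann Q τ1) (bpos Q τ1) (bsum Q τ1)
  have Beq := gibbs_eq Q τ2
  simp only [shannonEntropy]
  -- notations
  set H1 := -∑ a, boltzmann Q τ1 a * Real.log (boltzmann Q τ1 a) with hH1
  set H2 := -∑ a, boltzmann Q τ2 a * Real.log (boltzmann Q τ2 a) with hH2
  set E1 := ∑ a, boltzmann Q τ1 a * Q a with hE1
  set E2 := ∑ a, boltzmann Q τ2 a * Q a with hE2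
  -- A, Aeq : H2 + (1/τ1) E2 ≤ H1 + (1/τ1) E1
  -- B, Beq : H1 + (1/τ2) E1 ≤ H2 + (1/τ2) E2
  have hA : H2 + (1/τ1) * E2 ≤ H1 + (1/τ1) * E1 := by linarith
  have hB : H1 + (1/τ2) * E1 ≤ H2 + (1/τ2) * E2 := by linarith
  have hc : (1/τ2 : ℝ) < 1/τ1 := one_div_lt_one_div_of_lt h1 hlt
  have hc2 : (0:ℝ) < 1/τ2 := by positivity
  -- from hA, hB : (1/τ1 - 1/τ2)(E2 - E1) ≤ 0, so E2 ≤ E1, so H1 ≤ H2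
  have hd : E2 ≤ E1 := by nlinarith
  nlinarith [mul_nonneg hc2.le (sub_nonneg.2 hd)]
end

section
/- Total variation contraction of discounted occupancy measures: in a finite MDP with discount γ, if two policies π₁, π₂ satisfy max_s TV(π₁(·|s), π₂(·|s)) ≤ ε, then the total variation distance between their normalized discounted state-occupancy measures from any fixed initial state is at most γε/(1−γ). -/
open scoped BigOperators

/-- Total variation distance between finite distributions: `(1/2) Σ |p − q|`. -/
noncomputable def tvDist {α : Type*} [Fintype α] (p q : α → ℝ) : ℝ :=
  (1 / 2) * ∑ x, |p x - q x|

/-- Total variation contraction of discounted occupancy measures: in a finite MDP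
with transition kernel `P` and discount `γ ∈ [0,1)`, if two policies `π₁, π₂` satisfy
`max_s TV(π₁(·|s), π₂(·|s)) ≤ ε`, then the total variation distance between their
normalized discounted state-occupancy measures `d₁, d₂` from any fixed initial state
`s₀` is at most `γε/(1−γ)`. -/
theorem occupancy_tv_contraction {S A : Type*} [Fintype S] [Fintype A] [DecidableEq S]
    (P : S → A → S → ℝ) (hP : (∀ s a s', 0 ≤ P s a s') ∧ ∀ s a, ∑ s', P s a s' = 1)
    (γ : ℝ) (hγ : 0 ≤ γ) (hγ1 : γ < 1)
    (π₁ π₂ : S → A → ℝ)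
    (hπ₁ : (∀ s a, 0 ≤ π₁ s a) ∧ ∀ s, ∑ a, π₁ s a = 1)
    (hπ₂ : (∀ s a, 0 ≤ π₂ s a) ∧ ∀ s, ∑ a, π₂ s a = 1)
    (ε : ℝ) (hε : ∀ s, tvDist (π₁ s) (π₂ s) ≤ ε)
    (s₀ : S) (d₁ d₂ : S → ℝ)
    -- `d₁, d₂` are the normalized discounted occupancy measures of `π₁, π₂` from `s₀`
    (hd₁ : ∀ s, d₁ s = (1 - γ) * (if s = s₀ then 1 else 0) +
        γ * ∑ s', ∑ a, d₁ s' * π₁ s' a * P s' a s)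
    (hd₂ : ∀ s, d₂ s = (1 - γ) * (if s = s₀ then 1 else 0) +
        γ * ∑ s', ∑ a, d₂ s' * π₂ s' a * P s' a s)
    (hd₁pos : ∀ s, 0 ≤ d₁ s) (hd₂pos : ∀ s, 0 ≤ d₂ s)
    (hd₁sum : ∑ s, d₁ s = 1) (hd₂sum : ∑ s, d₂ s = 1) :
    tvDist d₁ d₂ ≤ γ * ε / (1 - γ) := by
  obtain ⟨hP0, hP1⟩ := hP
  obtain ⟨hπ₁0, hπ₁1⟩ := hπ₁
  obtain ⟨hπ₂0, hπ₂1⟩ := hπ₂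
  have hγ' : 0 < 1 - γ := by linarith
  set D := ∑ s, |d₁ s - d₂ s| with hDdef
  -- pointwise bound
  have step1 : ∀ s, |d₁ s - d₂ s|
      ≤ γ * ∑ s', ∑ a, |d₁ s' * π₁ s' a - d₂ s' * π₂ s' a| * P s' a s := by
    intro s
    have hsplit : γ * ∑ s', ∑ a, (d₁ s' * π₁ s' a - d₂ s' * π₂ s' a) * P s' a s
        = (γ * ∑ s', ∑ a, d₁ s' * π₁ s' a * P s' a s)
          - (γ * ∑ s', ∑ a, d₂ s' * π₂ s' a * P s' a s) := by
      rw [← mul_sub]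
      congr 1
      rw [← Finset.sum_sub_distrib]
      refine Finset.sum_congr rfl fun s' _ => ?_
      rw [← Finset.sum_sub_distrib]
      exact Finset.sum_congr rfl fun a _ => by ring
    have heq : d₁ s - d₂ s
        = γ * ∑ s', ∑ a, (d₁ s' * π₁ s' a - d₂ s' * π₂ s' a) * P s' a s := by
      rw [hd₁ s, hd₂ s, hsplit]; ring
    rw [heq, abs_mul, abs_of_nonneg hγ]
    refine mul_le_mul_of_nonneg_left ?_ hγ
    refine le_trans (Finset.abs_sum_le_sum_abs _ _) (Finset.sum_le_sum fun s' _ => ?_)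
    refine le_trans (Finset.abs_sum_le_sum_abs _ _) (Finset.sum_le_sum fun a _ => ?_)
    rw [abs_mul, abs_of_nonneg (hP0 s' a s)]
  -- sum over s and exchange sums
  have key : D ≤ γ * (D + 2 * ε) := by
    have h1 : D ≤ γ * ∑ s, ∑ s', ∑ a,
        |d₁ s' * π₁ s' a - d₂ s' * π₂ s' a| * P s' a s := by
      rw [Finset.mul_sum]
      exact Finset.sum_le_sum fun s _ => step1 s
    have hswap : ∑ s, ∑ s', ∑ a, |d₁ s' * π₁ s' a - d₂ s' * π₂ s' a| * P s' a s
        = ∑ s', ∑ a, |d₁ s' * π₁ s' a - d₂ s' * π₂ s' a| := by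
      rw [Finset.sum_comm]
      refine Finset.sum_congr rfl fun s' _ => ?_
      rw [Finset.sum_comm]
      refine Finset.sum_congr rfl fun a _ => ?_
      rw [← Finset.mul_sum, hP1 s' a, mul_one]
    have hinner : ∑ s', ∑ a, |d₁ s' * π₁ s' a - d₂ s' * π₂ s' a| ≤ D + 2 * ε := by
      have hbound : ∀ s', ∑ a, |d₁ s' * π₁ s' a - d₂ s' * π₂ s' a|
          ≤ |d₁ s' - d₂ s'| + d₂ s' * (2 * ε) := by
        intro s'
        have hpt : ∀ a, |d₁ s' * π₁ s' a - d₂ s' * π₂ s' a|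
            ≤ |d₁ s' - d₂ s'| * π₁ s' a + d₂ s' * |π₁ s' a - π₂ s' a| := by
          intro a
          have : d₁ s' * π₁ s' a - d₂ s' * π₂ s' a
              = (d₁ s' - d₂ s') * π₁ s' a + d₂ s' * (π₁ s' a - π₂ s' a) := by ring
          rw [this]
          refine le_trans (abs_add_le _ _) ?_
          rw [abs_mul, abs_mul, abs_of_nonneg (hπ₁0 s' a), abs_of_nonneg (hd₂pos s')]
        refine le_trans (Finset.sum_le_sum fun a _ => hpt a) ?_
        rw [Finset.sum_add_distrib, ← Finset.mul_sum, ← Finset.mul_sum, hπ₁1 s', mul_one]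
        have htv : ∑ a, |π₁ s' a - π₂ s' a| ≤ 2 * ε := by
          have := hε s'
          unfold tvDist at this
          linarith
        have := mul_le_mul_of_nonneg_left htv (hd₂pos s')
        linarith
      refine le_trans (Finset.sum_le_sum fun s' _ => hbound s') ?_
      rw [Finset.sum_add_distrib, ← Finset.sum_mul, hd₂sum, one_mul]
    calc D ≤ γ * ∑ s, ∑ s', ∑ a, |d₁ s' * π₁ s' a - d₂ s' * π₂ s' a| * P s' a s := h1
      _ = γ * ∑ s', ∑ a, |d₁ s' * π₁ s' a - d₂ s' * π₂ s' a| := by rw [hswap]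
      _ ≤ γ * (D + 2 * ε) := mul_le_mul_of_nonneg_left hinner hγ
  -- conclude
  show (1 / 2 : ℝ) * D ≤ γ * ε / (1 - γ)
  rw [le_div_iff₀ hγ']
  nlinarith [key]
end
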